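/- Let X be a connected quandle of type t (i.e., t is a positive integer with x ◁^t y = x for all x, y ∈ X, where ◁^t denotes the t-fold right operation). Then for all x, y ∈ X, the element e_x^t lies in the center of As(X) and e_x^t = e_y^t. -/

import Mathlib

/-- A quandle in the convention of the paper. -/
class PQuandle (X : Type*) where
  op : X → X → X
  op_self : ∀ a : X, op a a = a
  op_bij : ∀ a : X, Function.Bijective (fun x => op x a)
  op_distrib : ∀ a b c : X, op (op a b) c = op (op a c) (op b c)

infixl:65 " ◁ " => PQuandle.op

namespace PQuandle

variable {X : Type*} [PQuandle X]

/-- The `n`-fold right operation `x ◁ⁿ y`. -/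
def opn (x : X) (n : ℕ) (y : X) : X := (fun z => z ◁ y)^[n] x

/-- The right translation `(· ◁ y)` as a permutation of `X`. -/
noncomputable def act (y : X) : Equiv.Perm X := Equiv.ofBijective _ (op_bij y)

@[simp] lemma act_apply (y x : X) : act y x = x ◁ y := rfl

/-- The inner automorphism group `Inn(X)`. -/
noncomputable def Inn (X : Type*) [PQuandle X] : Subgroup (Equiv.Perm X) :=
  Subgroup.closure (Set.range (act (X := X)))

/-- The relators `e_{x ◁ y}⁻¹ e_y⁻¹ e_x e_y` of the adjoint group. -/
def adjRels (X : Type*) [PQuandle X] : Set (FreeGroup X) :=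
  { r | ∃ x y : X,
      r = (FreeGroup.of (x ◁ y))⁻¹ * (FreeGroup.of y)⁻¹ * FreeGroup.of x * FreeGroup.of y }

/-- The adjoint (enveloping) group `As(X)` of the quandle `X`. -/
def Adj (X : Type*) [PQuandle X] : Type _ := PresentedGroup (adjRels X)

instance : Group (Adj X) := by unfold Adj; infer_instance

/-- The generator `e_x` of `As(X)`. -/
def gen (x : X) : Adj X := PresentedGroup.of x

lemma gen_rel (x y : X) : gen (x ◁ y) = (gen y)⁻¹ * gen x * gen y := by
  have h : ((FreeGroup.of (x ◁ y))⁻¹ * (FreeGroup.of y)⁻¹ * FreeGroup.of x * FreeGroup.of y :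
      FreeGroup X) ∈ Subgroup.normalClosure (adjRels X) :=
    Subgroup.subset_normalClosure ⟨x, y, rfl⟩
  have h2 : ((gen (x ◁ y))⁻¹ * (gen y)⁻¹ * gen x * gen y : Adj X) = 1 := by
    have := (QuotientGroup.eq_one_iff
      (((FreeGroup.of (x ◁ y))⁻¹ * (FreeGroup.of y)⁻¹ * FreeGroup.of x * FreeGroup.of y :
        FreeGroup X))).mpr h
    exact this
  calc gen (x ◁ y)
      = gen (x ◁ y) * ((gen (x ◁ y))⁻¹ * (gen y)⁻¹ * gen x * gen y) := by rw [h2, mul_one]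
    _ = (gen y)⁻¹ * gen x * gen y := by group

lemma act_mul_act (x y : X) : act y * act x = act (x ◁ y) * act y := by
  ext z
  simp only [Equiv.Perm.mul_apply, act_apply]
  exact op_distrib z x y

/-- The homomorphism `As(X) → Perm(X)` sending `e_y` to the inverse of the right
translation by `y`; it encodes the right action of `As(X)` on `X`. -/
noncomputable def innHom : Adj X →* Equiv.Perm X :=
  PresentedGroup.toGroup (f := fun y : X => (act y)⁻¹) (by
    rintro r ⟨x, y, rfl⟩
    simp only [map_mul, map_inv, FreeGroup.lift_apply_of, inv_inv]
    have := act_mul_act x y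
    calc act (x ◁ y) * act y * (act x)⁻¹ * (act y)⁻¹
        = (act y * act x) * (act x)⁻¹ * (act y)⁻¹ := by rw [this]
      _ = 1 := by group)

@[simp] lemma innHom_gen (y : X) : innHom (gen y) = (act y)⁻¹ :=
  PresentedGroup.toGroup.of _

/-- The right action of `As(X)` on `X`: `x · g`. -/
noncomputable def ract (x : X) (g : Adj X) : X := (innHom g)⁻¹ x

@[simp] lemma ract_gen (x y : X) : ract x (gen y) = x ◁ y := by
  simp [ract]

lemma ract_mul (x : X) (g h : Adj X) : ract x (g * h) = ract (ract x g) h := by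
  simp [ract, map_mul]

/-- A quandle is connected if the right action of `As(X)` on `X` is transitive. -/
def Connected (X : Type*) [PQuandle X] : Prop :=
  ∀ x y : X, ∃ g : Adj X, ract x g = y

/-- The homomorphism `ε : As(X) → ℤ` sending every generator `e_x` to `1`. -/
def eps : Adj X →* Multiplicative ℤ :=
  PresentedGroup.toGroup (f := fun _ : X => Multiplicative.ofAdd 1) (by
    rintro r ⟨x, y, rfl⟩
    simp only [map_mul, map_inv, FreeGroup.lift_apply_of]
    group)

@[simp] lemma eps_gen (x : X) : eps (gen x) = Multiplicative.ofAdd 1 :=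
  PresentedGroup.toGroup.of _

/-- The underlying set of the universal covering quandle: `Ker ε`. -/
def covOp (a : X) (g h : (eps (X := X)).ker) : (eps (X := X)).ker :=
  ⟨(gen a)⁻¹ * g.1 * (h.1)⁻¹ * gen a * h.1, by
    have hg : eps g.1 = 1 := g.2
    have hh : eps h.1 = 1 := h.2
    simp only [MonoidHom.mem_ker, map_mul, map_inv, hg, hh]
    group⟩

/-- `n`-fold covering operation. -/
def covOpn (a : X) (g : (eps (X := X)).ker) (n : ℕ) (h : (eps (X := X)).ker) :
    (eps (X := X)).ker := (fun u => covOp a u h)^[n] g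

/-- The right translation of the covering quandle as a permutation. -/
def covAct (a : X) (h : (eps (X := X)).ker) : Equiv.Perm (eps (X := X)).ker where
  toFun g := covOp a g h
  invFun g := ⟨gen a * g.1 * (h.1)⁻¹ * (gen a)⁻¹ * h.1, by
    have hg : eps g.1 = 1 := g.2
    have hh : eps h.1 = 1 := h.2
    simp only [MonoidHom.mem_ker, map_mul, map_inv, hg, hh]
    group⟩
  left_inv g := by
    apply Subtype.ext
    simp only [covOp]
    group
  right_inv g := by
    apply Subtype.ext
    simp only [covOp]
    group

end PQuandle

/-!
Iterating `e_{x ◁ y} = e_y⁻¹ e_x e_y` gives `e_{x ◁ⁿ y} = e_y⁻ⁿ e_x e_yⁿ`; for `n = t` the left side is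
`e_x`, so `e_y^t` commutes with every generator and is central. Conjugation then fixes `e_x^t`, so
`z ↦ e_z^t` is invariant under the action of `As(X)` and hence constant on the single orbit `X`.
-/

namespace PQuandle

variable {X : Type*} [PQuandle X]

lemma closure_range_gen : Subgroup.closure (Set.range (gen (X := X))) = ⊤ :=
  PresentedGroup.closure_range_of _

lemma gen_opn (a b : X) (n : ℕ) : gen (opn a n b) = (gen b ^ n)⁻¹ * gen a * gen b ^ n := by
  induction n with
  | zero => simp [opn]
  | succ n ih =>
    rw [opn, Function.iterate_succ_apply', ← opn, gen_rel, ih]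
    group

lemma mem_center_of_forall_commute_gen {z : Adj X} (h : ∀ a : X, Commute z (gen a)) :
    z ∈ Subgroup.center (Adj X) := by
  rw [Subgroup.center_eq_iInf closure_range_gen]
  simp only [Subgroup.mem_iInf, Set.forall_mem_range, Subgroup.mem_centralizer_singleton_iff]
  exact fun a => (h a).eq

lemma gen_pow_mem_center_of_opn_eq {t : ℕ} (htype : ∀ x y : X, opn x t y = x) (b : X) :
    gen b ^ t ∈ Subgroup.center (Adj X) := by
  refine mem_center_of_forall_commute_gen fun a => ?_
  have h := gen_opn a b t
  rw [htype, mul_assoc, eq_inv_mul_iff_mul_eq] at h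
  exact h

lemma gen_op_pow_of_mem_center {t : ℕ} (a b : X) (h : gen a ^ t ∈ Subgroup.center (Adj X)) :
    gen (a ◁ b) ^ t = gen a ^ t := by
  have hconj := conj_pow (a := (gen b)⁻¹) (b := gen a) (i := t)
  rw [inv_inv] at hconj
  rw [gen_rel, hconj, mul_assoc, ← Subgroup.mem_center_iff.mp h (gen b), inv_mul_cancel_left]

lemma apply_ract_of_forall_op {α : Type*} {f : X → α} (hf : ∀ x y : X, f (x ◁ y) = f x)
    (x : X) (g : Adj X) : f (ract x g) = f x := by
  have hg : g ∈ Subgroup.closure (Set.range (gen (X := X))) := by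
    rw [closure_range_gen]
    trivial
  induction hg using Subgroup.closure_induction generalizing x with
  | mem _ hu =>
    obtain ⟨a, rfl⟩ := hu
    rw [ract_gen, hf]
  | one => simp [ract]
  | mul u v _ _ ihu ihv => rw [ract_mul, ihv, ihu]
  | inv u _ ihu =>
    rw [← ihu (ract x u⁻¹), ← ract_mul, inv_mul_cancel]
    simp [ract]

lemma Connected.apply_eq_of_forall_op (hconn : Connected X) {α : Type*} {f : X → α}
    (hf : ∀ x y : X, f (x ◁ y) = f x) (x y : X) : f x = f y := by
  obtain ⟨g, rfl⟩ := hconn x y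
  exact (apply_ract_of_forall_op hf x g).symm

end PQuandle

open PQuandle in
theorem stmt2 (X : Type*) [PQuandle X] (hconn : Connected X) (t : ℕ)
    (htype : ∀ x y : X, opn x t y = x) (x y : X) :
    gen x ^ t ∈ Subgroup.center (Adj X) ∧ gen x ^ t = gen y ^ t := by
  have hcenter := gen_pow_mem_center_of_opn_eq htype
  exact ⟨hcenter x,
    hconn.apply_eq_of_forall_op (f := fun z => gen z ^ t)
      (fun a b => gen_op_pow_of_mem_center a b (hcenter a)) x y⟩
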